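/- arXiv:1103.3657 — 4 statements merged into one kernel-verified Lean document; each statement's English description precedes it below -/
import Mathlib

section
/- If q ∈ ℚ⟦X⟧ has zero constant coefficient and satisfies X·(2·(q')² + 3·q' + 2) = q'·(1 + q), then 4·q = 2·X·q' − X·(q')², where q' denotes the formal derivative of q. -/
/-!
Write `p = q'`. The equation forces `p(0) = 0` and `p₁ = 2`, and eliminating `q` between the
equation and its derivative leaves the separable equation `p (p + 2) = 2 X p' (1 - p)`.
Its first integral `4 p / (p + 2)³` is fixed by the Euler operator `X · d/dX`, so it is a multiple
of `X`, and comparing coefficients of `X` gives `4 p = X (p + 2)³`. Multiplied by `p`, the claimed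
identity becomes exactly this one once `p q` is replaced using the equation.
-/

open PowerSeries

theorem Derivation.map_ofNat {R A M : Type*} [CommSemiring R] [CommSemiring A] [Algebra R A]
    [AddCommMonoid M] [Module A M] [Module R M] (D : Derivation R A M) (n : ℕ) [n.AtLeastTwo] :
    D (no_index (OfNat.ofNat n : A)) = 0 := by
  rw [← Nat.cast_ofNat, D.map_natCast]

theorem PowerSeries.coeff_X_mul_derivative {R : Type*} [CommSemiring R] (f : R⟦X⟧) (n : ℕ) :
    coeff n (X * d⁄dX R f) = n * coeff n f := by
  cases n with
  | zero => simp
  | succ n => rw [coeff_succ_X_mul, coeff_derivative, mul_comm]; push_cast; rfl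

theorem PowerSeries.eq_C_mul_X_of_X_mul_derivative_eq {R : Type*} [CommRing R]
    [IsAddTorsionFree R] {f : R⟦X⟧} (h : X * d⁄dX R f = f) : f = C (coeff 1 f) * X := by
  ext n
  rw [coeff_C_mul, coeff_X]
  split_ifs with hn
  · rw [hn, mul_one]
  · have hcoeff : n * coeff n f = coeff n f := by
      rw [← coeff_X_mul_derivative, h]
    have hsmul : ((n : ℤ) - 1) • coeff n f = 0 := by
      rw [sub_smul, one_smul, zsmul_eq_mul, Int.cast_natCast, hcoeff, sub_self]
    rw [mul_zero]
    exact (IsAddTorsionFree.zsmul_eq_zero_iff_right (by omega)).mp hsmul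

theorem PowerSeries.four_mul_eq_X_mul_add_two_pow_three {K : Type*} [Field K] [CharZero K]
    {p : K⟦X⟧} (hp0 : constantCoeff p = 0) (hp1 : coeff 1 p = 2)
    (hode : p * (p + 2) = 2 * X * d⁄dX K p * (1 - p)) :
    4 * p = X * (p + 2) ^ 3 := by
  set v := (p + 2)⁻¹ with hv_def
  have hv : (p + 2) * v = 1 := PowerSeries.mul_inv_cancel _ (by simp [hp0, map_ofNat])
  have hF : X * d⁄dX K (4 * p * v ^ 3) = 4 * p * v ^ 3 := by
    simp only [hv_def, Derivation.leibniz, Derivation.leibniz_pow, derivative_inv', map_add,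
      Derivation.map_ofNat, smul_eq_mul, nsmul_eq_mul]
    rw [← hv_def]
    linear_combination (-4 * v ^ 4) * hode + (4 * p * v ^ 3 - 4 * X * d⁄dX K p * v ^ 3) * hv
  obtain ⟨c, hc⟩ : ∃ c, 4 * p * v ^ 3 = C c * X := ⟨_, eq_C_mul_X_of_X_mul_derivative_eq hF⟩
  have h4p : 4 * p = C c * (X * (p + 2) ^ 3) := by
    linear_combination (p + 2) ^ 3 * hc - 4 * p * ((p + 2) ^ 2 * v ^ 2 + (p + 2) * v + 1) * hv
  have hc1 : c = 1 := by
    have h := congrArg (coeff 1) h4p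
    rw [← map_ofNat C 4, coeff_C_mul, coeff_C_mul, coeff_succ_X_mul,
      coeff_zero_eq_constantCoeff] at h
    simp only [hp1, map_pow, map_add, hp0, map_ofNat, zero_add] at h
    linear_combination (-1 / 8 : K) * h
  rw [h4p, hc1, map_one, one_mul]

section Quadrangulation

variable {R : Type*} [CommRing R] {q : R⟦X⟧}

theorem constantCoeff_derivative_eq_zero_of_quadrangulation (hq0 : constantCoeff q = 0)
    (hq : X * (2 * d⁄dX R q ^ 2 + 3 * d⁄dX R q + 2) = d⁄dX R q * (1 + q)) :
    constantCoeff (d⁄dX R q) = 0 := by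
  simpa [hq0] using (congrArg constantCoeff hq).symm

theorem coeff_one_derivative_eq_two_of_quadrangulation (hq0 : constantCoeff q = 0)
    (hq : X * (2 * d⁄dX R q ^ 2 + 3 * d⁄dX R q + 2) = d⁄dX R q * (1 + q)) :
    coeff 1 (d⁄dX R q) = 2 := by
  have hp0 := constantCoeff_derivative_eq_zero_of_quadrangulation hq0 hq
  have h := congrArg (coeff 1) hq
  rw [coeff_succ_X_mul, coeff_zero_eq_constantCoeff, coeff_one_mul] at h
  simpa [hp0, hq0, map_ofNat] using h.symm

theorem derivative_mul_add_two_eq_of_quadrangulation [IsDomain R] (hq0 : constantCoeff q = 0)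
    (hq : X * (2 * d⁄dX R q ^ 2 + 3 * d⁄dX R q + 2) = d⁄dX R q * (1 + q)) :
    d⁄dX R q * (d⁄dX R q + 2) = 2 * X * d⁄dX R (d⁄dX R q) * (1 - d⁄dX R q) := by
  have hp0 := constantCoeff_derivative_eq_zero_of_quadrangulation hq0 hq
  have hD := congrArg (d⁄dX R) hq
  simp only [Derivation.leibniz, Derivation.leibniz_pow, map_add, Derivation.map_ofNat,
    Derivation.map_one_eq_zero, derivative_X, smul_eq_mul, nsmul_eq_mul] at hD
  have h1p : 1 + d⁄dX R q ≠ 0 := fun h => by simpa [hp0] using congrArg constantCoeff h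
  apply mul_left_cancel₀ h1p
  linear_combination d⁄dX R q * hD - d⁄dX R (d⁄dX R q) * hq

end Quadrangulation

/-- If `q ∈ ℚ⟦X⟧` has zero constant coefficient and satisfies
`X·(2·(q')² + 3·q' + 2) = q'·(1 + q)`, then `4·q = 2·X·q' − X·(q')²`. -/
theorem quadrangulation_equation_implies_q_expression
    (q : PowerSeries ℚ) (hq0 : constantCoeff q = 0)
    (hq : X * (2 * (derivativeFun q) ^ 2 + 3 * derivativeFun q + 2)
        = derivativeFun q * (1 + q)) :
    4 * q = 2 * X * derivativeFun q - X * (derivativeFun q) ^ 2 := by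
  change X * (2 * d⁄dX ℚ q ^ 2 + 3 * d⁄dX ℚ q + 2) = d⁄dX ℚ q * (1 + q) at hq
  change 4 * q = 2 * X * d⁄dX ℚ q - X * d⁄dX ℚ q ^ 2
  have hp1 := coeff_one_derivative_eq_two_of_quadrangulation hq0 hq
  have h4p := four_mul_eq_X_mul_add_two_pow_three
    (constantCoeff_derivative_eq_zero_of_quadrangulation hq0 hq) hp1
    (derivative_mul_add_two_eq_of_quadrangulation hq0 hq)
  have hp : d⁄dX ℚ q ≠ 0 := fun h => by simp [h] at hp1
  apply mul_left_cancel₀ hp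
  linear_combination (-4) * hq - h4p
end

section
/- There exists a unique formal power series t in ℚ⟦X⟧ with zero constant coefficient satisfying the equation 3·X·(t')² + 1 = (t + 1)·t', where t' denotes the formal derivative of t. -/
/-!
Writing `u = t'`, the condition `t(0) = 0` makes `t = ∫ u`, and the equation becomes the
fixed-point equation `u = 1 + 3 X u² - (∫ u) u`. Its right-hand side is `X`-adically
contracting: changing `u` in degrees `≥ n` changes the result only in degrees `≥ n + 1`.
So the coefficients of a fixed point are forced one at a time, which gives both existence
and uniqueness.
-/

open PowerSeries

namespace PowerSeries

section FixedPoint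

variable {R : Type*} [CommRing R]

theorem eq_zero_of_forall_X_pow_dvd {f : R⟦X⟧} (h : ∀ n, X ^ n ∣ f) : f = 0 := by
  ext m
  exact X_pow_dvd_iff.mp (h (m + 1)) m (Nat.lt_succ_self m)

/-- The `n`-th coefficient of the fixed point of an `X`-adic contraction `Φ` is read off the image
under `Φ` of the truncation below `n`. -/
noncomputable def fixedPointCoeff (Φ : R⟦X⟧ → R⟦X⟧) (n : ℕ) : R :=
  coeff n (Φ (mk fun k ↦ if _ : k < n then fixedPointCoeff Φ k else 0))

theorem existsUnique_eq_of_X_pow_dvd_sub {Φ : R⟦X⟧ → R⟦X⟧}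
    (hΦ : ∀ n f g, X ^ n ∣ f - g → X ^ (n + 1) ∣ Φ f - Φ g) : ∃! f, Φ f = f := by
  have h_fix : Φ (mk (fixedPointCoeff Φ)) = mk (fixedPointCoeff Φ) := by
    ext n
    set below := mk fun k ↦ if _ : k < n then fixedPointCoeff Φ k else 0
    have h_below : X ^ n ∣ mk (fixedPointCoeff Φ) - below :=
      X_pow_dvd_iff.mpr fun m hm ↦ by simp [below, hm]
    have h_image := X_pow_dvd_iff.mp (hΦ n _ _ h_below) n (Nat.lt_succ_self n)
    rw [map_sub, sub_eq_zero] at h_image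
    rw [h_image, coeff_mk, fixedPointCoeff]
  refine ⟨_, h_fix, fun f hf ↦ sub_eq_zero.mp (eq_zero_of_forall_X_pow_dvd fun n ↦ ?_)⟩
  induction n with
  | zero => exact one_dvd _
  | succ n ih => simpa only [hf, h_fix] using hΦ n _ _ ih

end FixedPoint

section Integral

variable {K : Type*} [Field K] [CharZero K]

noncomputable def integral : K⟦X⟧ →ₗ[K] K⟦X⟧ where
  toFun f := X * mk fun n ↦ coeff n f / (n + 1)
  map_add' f g := by ext n; cases n <;> simp [add_div]
  map_smul' c f := by ext n; cases n <;> simp [mul_div_assoc]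

theorem constantCoeff_integral (f : K⟦X⟧) : constantCoeff (integral f) = 0 := by
  simp [integral]

theorem derivative_integral (f : K⟦X⟧) : d⁄dX K (integral f) = f := by
  ext n
  rw [coeff_derivative]
  simp only [integral, LinearMap.coe_mk, AddHom.coe_mk, coeff_succ_X_mul, coeff_mk]
  exact div_mul_cancel₀ _ (Nat.cast_add_one_ne_zero n)

theorem integral_derivative {f : K⟦X⟧} (hf : constantCoeff f = 0) : integral (d⁄dX K f) = f :=
  derivative.ext (derivative_integral _) (by rw [constantCoeff_integral, hf])

theorem X_pow_succ_dvd_integral {n : ℕ} {f : K⟦X⟧} (hf : X ^ n ∣ f) :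
    X ^ (n + 1) ∣ integral f := by
  rw [pow_succ']
  refine mul_dvd_mul_left X (X_pow_dvd_iff.mpr fun m hm ↦ ?_)
  simp [X_pow_dvd_iff.mp hf m hm]

end Integral

section SimpleTriangulation

variable {K : Type*} [Field K] [CharZero K]

/-- The equation `3 X t'² + 1 = (t + 1) t'` rewritten as `u = simpleTriangulationPicard u` in
terms of `u = t'` and `t = integral u`. -/
noncomputable def simpleTriangulationPicard (u : K⟦X⟧) : K⟦X⟧ :=
  1 + 3 * X * u ^ 2 - integral u * u

theorem X_pow_succ_dvd_simpleTriangulationPicard_sub {n : ℕ} {u v : K⟦X⟧}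
    (huv : X ^ n ∣ u - v) :
    X ^ (n + 1) ∣ simpleTriangulationPicard u - simpleTriangulationPicard v := by
  have h_split : simpleTriangulationPicard u - simpleTriangulationPicard v =
      X * (u - v) * (3 * (u + v)) - (integral (u - v) * u + integral v * (u - v)) := by
    rw [simpleTriangulationPicard, simpleTriangulationPicard, map_sub]
    ring
  have h_int_uv : (X : K⟦X⟧) * X ^ n ∣ integral (u - v) := by
    rw [← pow_succ']
    exact X_pow_succ_dvd_integral huv
  have h_int_v : (X : K⟦X⟧) ∣ integral v := dvd_mul_right _ _
  rw [h_split, pow_succ']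
  exact dvd_sub ((mul_dvd_mul_left X huv).mul_right _)
    (dvd_add (h_int_uv.mul_right u) (mul_dvd_mul h_int_v huv))

theorem simpleTriangulationPicard_derivative_eq_iff {t : K⟦X⟧} (ht : constantCoeff t = 0) :
    simpleTriangulationPicard (d⁄dX K t) = d⁄dX K t ↔
      3 * X * (d⁄dX K t) ^ 2 + 1 = (t + 1) * d⁄dX K t := by
  rw [simpleTriangulationPicard, integral_derivative ht]
  constructor <;> intro h <;> linear_combination h

end SimpleTriangulation

end PowerSeries

/-- There is a unique formal power series `t ∈ ℚ⟦X⟧` with zero constant coefficient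
satisfying `3·X·(t')² + 1 = (t + 1)·t'`. -/
theorem unique_simple_triangulation_series :
    ∃! t : PowerSeries ℚ, constantCoeff t = 0 ∧
      3 * X * (derivativeFun t) ^ 2 + 1 = (t + 1) * derivativeFun t := by
  obtain ⟨u, hu, hu_unique⟩ := existsUnique_eq_of_X_pow_dvd_sub fun _ _ _ ↦
    X_pow_succ_dvd_simpleTriangulationPicard_sub (K := ℚ)
  change ∃! t : ℚ⟦X⟧, constantCoeff t = 0 ∧ 3 * X * (d⁄dX ℚ t) ^ 2 + 1 = (t + 1) * d⁄dX ℚ t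
  refine ⟨integral u, ⟨constantCoeff_integral u, ?_⟩, fun t ⟨ht0, ht⟩ ↦ ?_⟩
  · rw [← simpleTriangulationPicard_derivative_eq_iff (constantCoeff_integral u),
      derivative_integral, hu]
  · rw [← integral_derivative ht0,
      hu_unique _ ((simpleTriangulationPicard_derivative_eq_iff ht0).mpr ht)]
end

section
/- Let P ∈ ℚ⟦X⟧ be the formal power series with constant coefficient 1 satisfying P² = 1 + 8·X·P³, and let y := X·(P·(9 − P²)/8)³ ∈ ℚ⟦X⟧, a series with zero constant coefficient. Let Q ∈ ℚ⟦T⟧ be the formal power series with zero constant coefficient satisfying Q·(1 − Q)³ = T. Then the substitution of y into Q equals (P² − 1)/8 in ℚ⟦X⟧. -/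
open PowerSeries

/-- Substitution of the power series `f` (assumed to have zero constant coefficient)
into the power series `g`. -/
noncomputable def substInto (f g : PowerSeries ℚ) : PowerSeries ℚ :=
  PowerSeries.mk fun n =>
    PowerSeries.coeff n (Polynomial.aeval f (PowerSeries.trunc (n + 1) g))

/-! `substInto y` is Mathlib's substitution `PowerSeries.subst y`, hence a ring homomorphism
sending `X` to `y`. So `A := Q ∘ y` solves `A (1 - A)³ = y`; so does `R := (P² - 1)/8`, because
`1 - R = (9 - P²)/8` and `R = X P³`. Finally `a ↦ a (1 - a)³` is injective on series without
constant term: `a (1 - a)³ - b (1 - b)³ = (a - b) G` with `G(0) = 1`, a unit. -/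

namespace PowerSeries

variable {R : Type*} [CommRing R]

theorem eq_of_mul_one_sub_pow_three_eq {a b : R⟦X⟧} (ha : constantCoeff a = 0)
    (hb : constantCoeff b = 0) (h : a * (1 - a) ^ 3 = b * (1 - b) ^ 3) : a = b := by
  set G : R⟦X⟧ := 1 - 3 * (a + b) + 3 * (a ^ 2 + a * b + b ^ 2)
    - (a ^ 3 + a ^ 2 * b + a * b ^ 2 + b ^ 3)
  have hG : IsUnit G := by
    rw [isUnit_iff_constantCoeff]
    simp [G, ha, hb]
  have hfactor : (a - b) * G = 0 := by linear_combination h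
  exact sub_eq_zero.mp (hG.mul_left_eq_zero.mp hfactor)

theorem coeff_subst_eq_coeff_aeval_trunc {y : R⟦X⟧} (hy : constantCoeff y = 0) (g : R⟦X⟧)
    {n m : ℕ} (hnm : n < m) :
    coeff n (g.subst y) = coeff n (Polynomial.aeval y (trunc m g)) := by
  have hy' : HasSubst y := HasSubst.of_constantCoeff_zero' hy
  have htail : X ^ m ∣ y ^ m * (mk fun k => coeff (k + m) g).subst y :=
    (pow_dvd_pow_of_dvd (X_dvd_iff.mpr hy) m).mul_right _
  conv_lhs => rw [eq_X_pow_mul_shift_add_trunc m g]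
  rw [subst_add hy', subst_mul hy', subst_pow hy', subst_X hy', subst_coe hy', map_add,
    X_pow_dvd_iff.mp htail n hnm, zero_add]

end PowerSeries

theorem substInto_eq_subst {y : ℚ⟦X⟧} (hy : constantCoeff y = 0) (g : ℚ⟦X⟧) :
    substInto y g = g.subst y := by
  ext n
  rw [substInto, coeff_mk, coeff_subst_eq_coeff_aeval_trunc hy g n.lt_succ_self]

theorem mul_one_sub_pow_three_eq_of_sq_eq {A : Type*} [CommRing A] {P x e : A}
    (hP : P ^ 2 = 1 + 8 * x * P ^ 3) (he : 8 * e = 1) :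
    (P ^ 2 - 1) * e * (1 - (P ^ 2 - 1) * e) ^ 3 = x * (P * (9 - P ^ 2) * e) ^ 3 := by
  have hcompl : 1 - (P ^ 2 - 1) * e = (9 - P ^ 2) * e := by linear_combination -he
  rw [hcompl]
  linear_combination ((9 - P ^ 2) ^ 3 * e ^ 4) * hP + (x * P ^ 3 * (9 - P ^ 2) ^ 3 * e ^ 3) * he

/-- Let `P(0) = 1` with `P² = 1 + 8XP³`, and `y := X·(P·(9−P²)/8)³`; let `Q(0) = 0`
with `Q·(1−Q)³ = T`. Then substituting `y` into `Q` gives `(P² − 1)/8`. -/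
theorem subst_triang_to_simple_triang
    (P Q : PowerSeries ℚ)
    (hP0 : constantCoeff P = 1) (hP : P ^ 2 = 1 + 8 * X * P ^ 3)
    (hQ0 : constantCoeff Q = 0) (hQ : Q * (1 - Q) ^ 3 = X) :
    substInto (X * (P * (9 - P ^ 2) * (8 : PowerSeries ℚ)⁻¹) ^ 3) Q
      = (P ^ 2 - 1) * (8 : PowerSeries ℚ)⁻¹ := by
  set y : ℚ⟦X⟧ := X * (P * (9 - P ^ 2) * (8 : PowerSeries ℚ)⁻¹) ^ 3
  have hy : constantCoeff y = 0 := by simp [y]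
  have he : (8 : ℚ⟦X⟧) * 8⁻¹ = 1 := PowerSeries.mul_inv_cancel _ (by rw [map_ofNat]; norm_num)
  have hQy : Q.subst y * (1 - Q.subst y) ^ 3 = y := by
    have := congrArg (substAlgHom (HasSubst.of_constantCoeff_zero' hy)) hQ
    rwa [map_mul, map_pow, map_sub, map_one, substAlgHom_X, coe_substAlgHom] at this
  rw [substInto_eq_subst hy]
  refine eq_of_mul_one_sub_pow_three_eq (constantCoeff_subst_eq_zero hy Q hQ0)
    (by simp [hP0]) ?_
  rw [hQy, mul_one_sub_pow_three_eq_of_sq_eq hP he]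
end

section
/- Let Q ∈ ℚ⟦X⟧ be the formal power series with constant coefficient 1 satisfying Q = 1 + X·Q³, and let g := 3·Q − Q² − 2 ∈ ℚ⟦X⟧. Let Y ∈ ℚ⟦X⟧ be the unique formal power series with zero constant coefficient satisfying (Q − 1)·(Y² + 1) = Y, and let Z ∈ ℚ⟦T⟧ be the unique formal power series with zero constant coefficient satisfying R·(Z² + 1) = Z, where R ∈ ℚ⟦T⟧ has zero constant coefficient and satisfies R = T + R². Then the substitution of g into Z equals Y in ℚ⟦X⟧. -/
open PowerSeries

/-!
Since `Q − 1 = g + (Q − 1)²` is a polynomial identity in `Q`, substituting `g` into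
`R = T + R²` shows that `R ∘ g` and `Q − 1` solve the same fixed-point equation
`x = g + x²`, hence agree. Substituting `g` into `R (Z² + 1) = Z` then shows that `Z ∘ g`
and `Y` both solve `(Q − 1)(x² + 1) = x`. Both equations have at most one solution, because
the difference `d` of two solutions satisfies `d = u d` with `u(0) = 0`.
-/

namespace PowerSeries

variable {A : Type*} [CommRing A]

theorem eq_of_sub_eq_mul_sub {a b u : A⟦X⟧} (hu : constantCoeff u = 0)
    (h : a - b = u * (a - b)) : a = b := by
  have hunit : IsUnit (1 - u) := by
    rw [isUnit_iff_constantCoeff, map_sub, map_one, hu, sub_zero]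
    exact isUnit_one
  rw [← sub_eq_zero, ← hunit.mul_right_eq_zero]
  linear_combination h

theorem eq_of_eq_add_sq {c a b : A⟦X⟧} (ha0 : constantCoeff a = 0)
    (hb0 : constantCoeff b = 0) (ha : a = c + a ^ 2) (hb : b = c + b ^ 2) : a = b :=
  eq_of_sub_eq_mul_sub (u := a + b) (by rw [map_add, ha0, hb0, add_zero])
    (by linear_combination ha - hb)

theorem eq_of_mul_sq_add_one {c a b : A⟦X⟧} (hc : constantCoeff c = 0)
    (ha : c * (a ^ 2 + 1) = a) (hb : c * (b ^ 2 + 1) = b) : a = b :=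
  eq_of_sub_eq_mul_sub (u := c * (a + b)) (by rw [map_mul, hc, zero_mul])
    (by linear_combination hb - ha)

theorem coeff_subst_trunc {f : A⟦X⟧} (hf : constantCoeff f = 0) (g : A⟦X⟧) (n : ℕ) :
    coeff n (subst f (trunc (n + 1) g : A⟦X⟧)) = coeff n (subst f g) := by
  have hord : ((n + 1 : ℕ) : ℕ∞) ≤ order (g - (trunc (n + 1) g : A⟦X⟧)) :=
    nat_le_order _ _ fun i hi => by simp [coeff_trunc, hi]
  have hzero := coeff_of_lt_order n <|
    (Nat.cast_lt.2 n.lt_succ_self).trans_le (hord.trans (le_order_subst_left' hf))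
  rwa [subst_sub (HasSubst.of_constantCoeff_zero' hf), map_sub, sub_eq_zero, eq_comm] at hzero

end PowerSeries

theorem substInto_eq_subst_s18 {f : ℚ⟦X⟧} (hf : constantCoeff f = 0) (g : ℚ⟦X⟧) :
    substInto f g = subst f g := by
  ext n
  rw [substInto, coeff_mk, ← coeff_subst_trunc hf g n,
    subst_coe (HasSubst.of_constantCoeff_zero' hf)]

theorem subst_Y_series_quad_general
    (Q R Y Z : PowerSeries ℚ)
    (hQ0 : constantCoeff Q = 1)
    (hR0 : constantCoeff R = 0) (hR : R = X + R ^ 2)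
    (hY : (Q - 1) * (Y ^ 2 + 1) = Y)
    (hZ : R * (Z ^ 2 + 1) = Z) :
    substInto (3 * Q - Q ^ 2 - 2) Z = Y := by
  set g : ℚ⟦X⟧ := 3 * Q - Q ^ 2 - 2
  have hQ1 : constantCoeff (Q - 1) = 0 := by rw [map_sub, hQ0, map_one, sub_self]
  have hQg : Q - 1 = g + (Q - 1) ^ 2 := by ring
  have hg0 : constantCoeff g = 0 := by
    simpa [hQ1] using (congrArg constantCoeff hQg).symm
  have hg := HasSubst.of_constantCoeff_zero' hg0
  have hRg : subst g R = Q - 1 := by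
    refine eq_of_eq_add_sq (constantCoeff_subst_eq_zero hg0 R hR0) hQ1 ?_ hQg
    conv_lhs => rw [hR]
    rw [subst_add hg, subst_X hg, subst_pow hg]
  have hZg : (Q - 1) * (subst g Z ^ 2 + 1) = subst g Z := by
    conv_rhs => rw [← hZ]
    rw [← hRg, ← coe_substAlgHom hg]
    simp only [map_mul, map_add, map_pow, map_one]
  rw [substInto_eq_subst_s18 hg0]
  exact eq_of_mul_sq_add_one hQ1 hZg hY

/-- Let `Q(0) = 1` with `Q = 1 + X·Q³` and `g := 3Q − Q² − 2`. Let `Y(0) = 0`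
satisfy `(Q−1)·(Y² + 1) = Y` and `Z(0) = 0` satisfy `R·(Z² + 1) = Z`, where
`R(0) = 0` and `R = T + R²`. Then substituting `g` into `Z` gives `Y`. -/
theorem subst_Y_series_quad
    (Q R Y Z : PowerSeries ℚ)
    (hQ0 : constantCoeff Q = 1) (hQ : Q = 1 + X * Q ^ 3)
    (hR0 : constantCoeff R = 0) (hR : R = X + R ^ 2)
    (hY0 : constantCoeff Y = 0) (hY : (Q - 1) * (Y ^ 2 + 1) = Y)
    (hZ0 : constantCoeff Z = 0) (hZ : R * (Z ^ 2 + 1) = Z) :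
    substInto (3 * Q - Q ^ 2 - 2) Z = Y :=
  subst_Y_series_quad_general Q R Y Z hQ0 hR0 hR hY hZ
end
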